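/- Every nonempty irreducible closed subset of the proper space Prp(A) of a commutative ring A with identity has a unique generic point: there is exactly one proper ideal I such that the closure of {I} in Prp(A) equals the given irreducible closed set. -/
import Mathlib


open TopologicalSpace

/-- `v(I)`: the set of all ideals containing `I`. -/
def vSet {A : Type*} [CommRing A] (I : Ideal A) : Set (Ideal A) := {S : Ideal A | I ≤ S}

/-- The coarse lower topology on the set `Idl(A)` of all ideals of `A`: the topology with
closed subbase `{v(I) : I ∈ Idl(A)}`, i.e. generated by the open sets `v(I)ᶜ`. -/
instance coarseLower (A : Type*) [CommRing A] : TopologicalSpace (Ideal A) :=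
  generateFrom {U : Set (Ideal A) | ∃ I : Ideal A, U = (vSet I)ᶜ}

/-- `Prp(A)`: the proper ideals of `A`, with the subspace topology from `Idl(A)`. -/
abbrev Prp (A : Type*) [CommRing A] : Type _ := {I : Ideal A // I ≠ ⊤}

section Aux

variable {A : Type*} [CommRing A]

/-- Open sets in the coarse lower topology are lower sets. -/
lemma isLowerSet_open {V : Set (Ideal A)} (hV : IsOpen V) :
    ∀ ⦃T T' : Ideal A⦄, T' ≤ T → T ∈ V → T' ∈ V := by
  induction hV with
  | basic U hU =>
      obtain ⟨K, rfl⟩ := hU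
      intro T T' h hT hK
      exact hT (le_trans hK h)
  | univ => intro T T' _ _; trivial
  | inter U W _ _ ihU ihW =>
      intro T T' h hT
      exact ⟨ihU h hT.1, ihW h hT.2⟩
  | sUnion 𝒮 _ ih =>
      intro T T' h hT
      obtain ⟨U, hU, hTU⟩ := hT
      exact ⟨U, hU, ih U hU h hTU⟩

/-- Any open neighbourhood in the coarse lower topology contains a basic open
neighbourhood given by finitely many ideals not below the point. -/
lemma exists_finset_nhds {V : Set (Ideal A)} (hV : IsOpen V) :
    ∀ S ∈ V, ∃ F : Finset (Ideal A), (∀ K ∈ F, ¬ K ≤ S) ∧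
      ∀ T : Ideal A, (∀ K ∈ F, ¬ K ≤ T) → T ∈ V := by
  classical
  induction hV with
  | basic U hU =>
      obtain ⟨K, rfl⟩ := hU
      intro S hS
      refine ⟨{K}, by simpa [vSet] using hS, fun T hT => ?_⟩
      simpa [vSet] using hT K (Finset.mem_singleton_self K)
  | univ => intro S _; exact ⟨∅, by simp, by simp⟩
  | inter U W _ _ ihU ihW =>
      intro S hS
      obtain ⟨F1, h1, h1'⟩ := ihU S hS.1
      obtain ⟨F2, h2, h2'⟩ := ihW S hS.2
      refine ⟨F1 ∪ F2, fun K hK => (Finset.mem_union.1 hK).elim (h1 K) (h2 K),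
        fun T hT => ⟨h1' T fun K hK => hT K (Finset.mem_union_left _ hK),
                     h2' T fun K hK => hT K (Finset.mem_union_right _ hK)⟩⟩
  | sUnion 𝒮 _ ih =>
      intro S hS
      obtain ⟨U, hU, hSU⟩ := hS
      obtain ⟨F, hF, hF'⟩ := ih U hU S hSU
      exact ⟨F, hF, fun T hT => ⟨U, hU, hF' T hT⟩⟩

/-- The up-set of an ideal, seen inside `Prp A`, is closed. -/
lemma isClosed_upPrp (K : Ideal A) : IsClosed {S : Prp A | K ≤ S.1} := by
  have h : IsClosed (vSet K) := by
    rw [← isOpen_compl_iff]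
    exact TopologicalSpace.GenerateOpen.basic _ ⟨K, rfl⟩
  exact h.preimage continuous_subtype_val

/-- Closure of a singleton in `Prp A` is the up-set. -/
lemma closure_singleton_prp (I : Prp A) :
    closure {I} = {S : Prp A | I.1 ≤ S.1} := by
  apply subset_antisymm
  · exact closure_minimal (Set.singleton_subset_iff.mpr (le_refl I.1)) (isClosed_upPrp I.1)
  · intro S hS
    rw [mem_closure_iff]
    intro U hU hSU
    rw [isOpen_induced_iff] at hU
    obtain ⟨V, hV, rfl⟩ := hU
    exact ⟨I, isLowerSet_open hV hS hSU, rfl⟩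

end Aux

/-- Every nonempty irreducible closed subset of the proper space `Prp(A)` has a unique
generic point: exactly one proper ideal whose closure is the given set. -/
theorem prp_unique_generic_point (A : Type*) [CommRing A] (C : Set (Prp A))
    (hC : IsClosed C) (hirr : IsIrreducible C) :
    ∃! I : Prp A, closure {I} = C := by
  obtain ⟨T0, hT0⟩ := hirr.nonempty
  set J : Ideal A := sInf (Subtype.val '' C) with hJdef
  have hJle : ∀ S ∈ C, J ≤ (S : Prp A).1 := fun S hS =>
    sInf_le ⟨S, hS, rfl⟩
  have hJne : J ≠ ⊤ := by
    intro h
    have := hJle T0 hT0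
    rw [h] at this
    exact T0.2 (top_le_iff.1 this)
  set Jp : Prp A := ⟨J, hJne⟩ with hJp
  classical
  have key : C = {S : Prp A | J ≤ S.1} := by
    apply subset_antisymm
    · exact fun S hS => hJle S hS
    · intro S hS
      by_contra hSC
      -- `S` lies in the open complement of `C`
      have hopen : IsOpen Cᶜ := hC.isOpen_compl
      rw [isOpen_induced_iff] at hopen
      obtain ⟨V, hV, hVeq⟩ := hopen
      have hSV : S.1 ∈ V := by
        have : S ∈ Cᶜ := hSC
        rw [← hVeq] at this
        exact this
      obtain ⟨F, hF, hF'⟩ := exists_finset_nhds hV S.1 hSV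
      -- every element of `C` contains some `K ∈ F`
      have hcover : C ⊆ ⋃ K ∈ F, {T : Prp A | K ≤ T.1} := by
        intro T hT
        have hTV : T.1 ∉ V := by
          intro h
          have : T ∈ Cᶜ := by rw [← hVeq]; exact h
          exact this hT
        by_contra hcon
        refine hTV (hF' T.1 fun K hK hle => hcon ?_)
        exact Set.mem_biUnion hK hle
      -- irreducibility gives one `K` that works for all of `C`
      rw [isIrreducible_iff_sUnion_isClosed] at hirr
      have hZ : C ⊆ ⋃₀ ↑(F.image fun K => {T : Prp A | K ≤ T.1}) := by
        intro T hT
        obtain ⟨K, hK1, hK2⟩ := Set.mem_iUnion₂.1 (hcover hT)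
        exact ⟨{T : Prp A | K ≤ T.1},
          Finset.mem_coe.mpr (Finset.mem_image_of_mem _ hK1), hK2⟩
      obtain ⟨z, hz, hCz⟩ := hirr _ (by
        intro z hz
        obtain ⟨K, _, rfl⟩ := Finset.mem_image.1 (Finset.mem_coe.1 hz)
        exact isClosed_upPrp K) hZ
      obtain ⟨K, hKF, rfl⟩ := Finset.mem_image.1 (Finset.mem_coe.1 hz)
      have hKJ : K ≤ J := le_sInf (by rintro _ ⟨T, hT, rfl⟩; exact hCz hT)
      exact hF K hKF (hKJ.trans hS)
  refine ⟨Jp, ?_, ?_⟩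
  · show closure {Jp} = C
    rw [closure_singleton_prp, key]
  · intro I hI
    have h1 : closure {I} = closure {Jp} := by
      rw [hI, closure_singleton_prp, key]
    rw [closure_singleton_prp, closure_singleton_prp] at h1
    have hIJ : I.1 ≤ J := by
      have : Jp ∈ {S : Prp A | I.1 ≤ S.1} := h1 ▸ (le_refl J)
      exact this
    have hJI : J ≤ I.1 := by
      have : I ∈ {S : Prp A | J ≤ S.1} := by rw [← h1]; exact le_refl I.1
      exact this
    exact Subtype.ext (le_antisymm hIJ hJI)
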